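/- Absorbing-Region Decomposition (soundness): let (A₁,B₁),…,(A_k,B_k) be a Streett acceptance condition of measurable subsets of S. Suppose there exist a measurable region I ⊆ S and measurable regions J₁,…,J_k with J_i ⊆ I \ A_i for each i, such that for every i = 1,…,k: (1) sup_{s ∈ J_i} P_{δ_s}(σ_{A_i} < ∞) < 1, and (2) inf_{s ∈ I} P_{δ_s}(σ_{B_i ∪ J_i ∪ Iᶜ} < ∞) = 1 (i.e., for every s ∈ I, P_{δ_s}(σ_{B_i ∪ J_i ∪ Iᶜ} < ∞) = 1). Then P_μ(⋂_{i=1}^k (Fin(A_i) ∪ Inf(B_i))) ≥ P_μ(I^ω). -/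

import Mathlib

open MeasureTheory ProbabilityTheory Filter Set ENNReal

/-- The one-step shift on trajectories: `shift ω n = ω (n+1)`. -/
def shift {S : Type*} (ω : ℕ → S) : ℕ → S := fun n => ω (n + 1)

/-- `Fin A`: the event of visiting `A` only finitely many times. -/
def finVisits {S : Type*} (A : Set S) : Set (ℕ → S) :=
  {ω | ∃ n, ∀ m, n ≤ m → ω m ∉ A}

/-- `Inf B`: the event of visiting `B` infinitely many times. -/
def infVisits {S : Type*} (B : Set S) : Set (ℕ → S) :=
  {ω | ∀ n, ∃ m, n ≤ m ∧ ω m ∈ B}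

/-- `{σ_A < ∞}`: the event that the first return time to `A` is finite,
where `σ_A = 1 + τ_A ∘ shift`; equivalently `∃ n, ω (n+1) ∈ A`. -/
def retEvent {S : Type*} (A : Set S) : Set (ℕ → S) := {ω | ∃ n, ω (n + 1) ∈ A}

/-- `I^ω`: the event of remaining in `I` forever. -/
def invEvent {S : Type*} (I : Set S) : Set (ℕ → S) := {ω | ∀ n, ω n ∈ I}

/-- Prepend a state to a trajectory. -/
def consTraj {S : Type*} (s : S) (ω : ℕ → S) : ℕ → S
  | 0 => s
  | n + 1 => ω n

/-- `T` is the Ionescu–Tulcea trajectory kernel of the time-homogeneous Markov chain with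
transition kernel `P`: `T s` is the law on `S^ℕ` (with the product σ-algebra) of the
coordinate Markov chain with kernel `P` started at `s`.  It is uniquely characterised
(by the Ionescu–Tulcea theorem) by the one-step Markov recursion below: the trajectory
from `s` is `s` followed by a trajectory started from a `P s`-distributed state.
The trajectory measure `P_ξ` with initial distribution `ξ` is then `ξ.bind (fun s => T s)`,
and `P_{δ_s} = T s`. -/
def IsTrajKernel {S : Type*} [MeasurableSpace S] (P : Kernel S S)
    (T : Kernel S (ℕ → S)) : Prop :=
  ∀ s : S, (T s : Measure (ℕ → S)) =
    ((P s : Measure S).bind (fun u => (T u : Measure (ℕ → S)))).map (consTraj s)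

set_option linter.unusedSectionVars false

section Aux
variable {S : Type*} [MeasurableSpace S]

lemma measurable_shift : Measurable (shift : (ℕ → S) → ℕ → S) :=
  measurable_pi_lambda _ (fun n => measurable_pi_apply (n + 1))

lemma measurable_shift_iter (n : ℕ) : Measurable (shift^[n] : (ℕ → S) → ℕ → S) := by
  induction n with
  | zero => exact measurable_id
  | succ n ih => rw [Function.iterate_succ]; exact ih.comp measurable_shift

lemma measurable_consTraj (s : S) : Measurable (consTraj s) := by
  apply measurable_pi_lambda
  intro n
  cases n with
  | zero => exact measurable_const
  | succ m => exact measurable_pi_apply m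

lemma shift_consTraj (s : S) (ω : ℕ → S) : shift (consTraj s ω) = ω := rfl

lemma shift_iter_apply (k : ℕ) (ω : ℕ → S) (n : ℕ) : shift^[k] ω n = ω (n + k) := by
  induction k generalizing ω with
  | zero => rfl
  | succ k ih =>
    rw [Function.iterate_succ_apply, ih]
    simp [shift, Nat.add_assoc, Nat.add_comm 1 k]

lemma measurableSet_retEvent {A : Set S} (hA : MeasurableSet A) :
    MeasurableSet (retEvent A) := by
  have : retEvent A = ⋃ n, (fun ω : ℕ → S => ω (n+1)) ⁻¹' A := by
    ext ω; simp [retEvent]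
  rw [this]
  exact MeasurableSet.iUnion fun n => (measurable_pi_apply (n+1)) hA

lemma measurableSet_invEvent {I : Set S} (hI : MeasurableSet I) :
    MeasurableSet (invEvent I) := by
  have : invEvent I = ⋂ n, (fun ω : ℕ → S => ω n) ⁻¹' I := by ext ω; simp [invEvent]
  rw [this]
  exact MeasurableSet.iInter fun n => (measurable_pi_apply n) hI

lemma measurableSet_infVisits {B : Set S} (hB : MeasurableSet B) :
    MeasurableSet (infVisits B) := by
  have : infVisits B = ⋂ n, ⋃ m, ⋃ _ : n ≤ m, (fun ω : ℕ → S => ω m) ⁻¹' B := by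
    ext ω; simp [infVisits]
  rw [this]
  exact MeasurableSet.iInter fun n => MeasurableSet.iUnion fun m =>
    MeasurableSet.iUnion fun _ => (measurable_pi_apply m) hB

lemma measurableSet_finVisits {A : Set S} (hA : MeasurableSet A) :
    MeasurableSet (finVisits A) := by
  have : finVisits A = (infVisits A)ᶜ := by
    ext ω
    simp only [finVisits, infVisits, mem_compl_iff, mem_setOf_eq, not_forall, not_exists]
    constructor
    · rintro ⟨n, h⟩; exact ⟨n, fun m hm => (h m hm.1 hm.2).elim⟩
    · rintro ⟨n, h⟩; exact ⟨n, fun m hnm hmA => h m ⟨hnm, hmA⟩⟩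
  rw [this]
  exact (measurableSet_infVisits hA).compl

lemma finVisits_eq_compl {A : Set S} : finVisits A = (infVisits A)ᶜ := by
  ext ω
  simp only [finVisits, infVisits, mem_compl_iff, mem_setOf_eq, not_forall, not_exists]
  constructor
  · rintro ⟨n, h⟩; exact ⟨n, fun m hm => (h m hm.1 hm.2).elim⟩
  · rintro ⟨n, h⟩; exact ⟨n, fun m hnm hmA => h m ⟨hnm, hmA⟩⟩

lemma measurableSet_prefix {U : ℕ → Set S} (hU : ∀ j, MeasurableSet (U j)) (n : ℕ) :
    MeasurableSet {ω : ℕ → S | ∀ j ≤ n, ω j ∈ U j} := by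
  have : {ω : ℕ → S | ∀ j ≤ n, ω j ∈ U j} = ⋂ j, ⋂ _ : j ≤ n, (fun ω : ℕ → S => ω j) ⁻¹' U j := by
    ext ω; simp
  rw [this]
  exact MeasurableSet.iInter fun j => MeasurableSet.iInter fun _ => (measurable_pi_apply j) (hU j)

end Aux

section MarkovAux
variable {S : Type*} [MeasurableSpace S]

lemma traj_step (P : Kernel S S) (T : Kernel S (ℕ → S)) (hT : IsTrajKernel P T)
    (s : S) {G : Set (ℕ → S)} (hG : MeasurableSet G) :
    T s G = ∫⁻ u, T u (consTraj s ⁻¹' G) ∂(P s) := by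
  rw [hT s, Measure.map_apply (measurable_consTraj s) hG,
    Measure.bind_apply ((measurable_consTraj s) hG) T.measurable.aemeasurable]

lemma markov_bound (P : Kernel S S) [IsMarkovKernel P] (T : Kernel S (ℕ → S))
    [IsMarkovKernel T] (hT : IsTrajKernel P T)
    {F : Set (ℕ → S)} (hF : MeasurableSet F) (ε : ℝ≥0∞) :
    ∀ (n : ℕ) (U : ℕ → Set S), (∀ j, MeasurableSet (U j)) →
      (∀ u ∈ U n, T u F ≤ ε) → ∀ s : S,
      T s ({ω | ∀ j ≤ n, ω j ∈ U j} ∩ shift^[n] ⁻¹' F)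
        ≤ ε * T s {ω | ∀ j ≤ n, ω j ∈ U j} := by
  intro n
  induction n with
  | zero =>
    intro U hU hε s
    by_cases hs : s ∈ U 0
    · have h1 : T s ({ω : ℕ → S | ∀ j ≤ 0, ω j ∈ U j} ∩ shift^[0] ⁻¹' F) ≤ ε := by
        calc T s ({ω : ℕ → S | ∀ j ≤ 0, ω j ∈ U j} ∩ shift^[0] ⁻¹' F) ≤ T s F := by
              apply measure_mono
              intro ω hω
              simpa using hω.2
          _ ≤ ε := hε s hs
      have h2 : T s {ω : ℕ → S | ∀ j ≤ 0, ω j ∈ U j} = 1 := by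
        rw [traj_step P T hT s (measurableSet_prefix hU 0)]
        have : consTraj s ⁻¹' {ω : ℕ → S | ∀ j ≤ 0, ω j ∈ U j} = univ := by
          ext ω
          simp only [mem_preimage, mem_setOf_eq, mem_univ, iff_true]
          intro j hj
          interval_cases j
          exact hs
        rw [this]
        simp
      rw [h2, mul_one]
      exact h1
    · have h0 : T s {ω : ℕ → S | ∀ j ≤ 0, ω j ∈ U j} = 0 := by
        rw [traj_step P T hT s (measurableSet_prefix hU 0)]
        have : consTraj s ⁻¹' {ω : ℕ → S | ∀ j ≤ 0, ω j ∈ U j} = ∅ := by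
          ext ω
          simp only [mem_preimage, mem_setOf_eq, mem_empty_iff_false, iff_false, not_forall]
          exact ⟨0, le_refl 0, hs⟩
        rw [this]
        simp
      have := measure_mono (μ := (T s : Measure (ℕ → S)))
        (inter_subset_left (s := {ω : ℕ → S | ∀ j ≤ 0, ω j ∈ U j}) (t := shift^[0] ⁻¹' F))
      rw [h0] at this
      simpa using le_trans this (zero_le)
  | succ n ih =>
    intro U hU hε s
    have hpre := measurableSet_prefix hU (n+1)
    have hG : MeasurableSet ({ω : ℕ → S | ∀ j ≤ n+1, ω j ∈ U j} ∩ shift^[n+1] ⁻¹' F) :=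
      hpre.inter ((measurable_shift_iter (n+1)) hF)
    by_cases hs : s ∈ U 0
    · have hpre' : consTraj s ⁻¹' {ω : ℕ → S | ∀ j ≤ n+1, ω j ∈ U j}
          = {ω : ℕ → S | ∀ j ≤ n, ω j ∈ U (j+1)} := by
        ext ω
        simp only [mem_preimage, mem_setOf_eq]
        constructor
        · intro h j hj
          exact h (j+1) (by omega)
        · intro h j hj
          cases j with
          | zero => exact hs
          | succ j' => exact h j' (by omega)
      have hGpre : consTraj s ⁻¹' ({ω : ℕ → S | ∀ j ≤ n+1, ω j ∈ U j} ∩ shift^[n+1] ⁻¹' F)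
          = {ω : ℕ → S | ∀ j ≤ n, ω j ∈ U (j+1)} ∩ shift^[n] ⁻¹' F := by
        rw [preimage_inter, hpre']
        rfl
      rw [traj_step P T hT s hG, hGpre]
      have hbound : ∀ u : S, T u ({ω : ℕ → S | ∀ j ≤ n, ω j ∈ U (j+1)} ∩ shift^[n] ⁻¹' F)
          ≤ ε * T u {ω : ℕ → S | ∀ j ≤ n, ω j ∈ U (j+1)} :=
        ih (fun j => U (j+1)) (fun j => hU (j+1)) hε
      calc ∫⁻ u, T u ({ω : ℕ → S | ∀ j ≤ n, ω j ∈ U (j+1)} ∩ shift^[n] ⁻¹' F) ∂(P s)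
          ≤ ∫⁻ u, ε * T u {ω : ℕ → S | ∀ j ≤ n, ω j ∈ U (j+1)} ∂(P s) :=
            lintegral_mono hbound
        _ = ε * ∫⁻ u, T u {ω : ℕ → S | ∀ j ≤ n, ω j ∈ U (j+1)} ∂(P s) :=
            lintegral_const_mul ε (T.measurable_coe (measurableSet_prefix (fun j => hU (j+1)) n))
        _ = ε * T s {ω : ℕ → S | ∀ j ≤ n+1, ω j ∈ U j} := by
            rw [traj_step P T hT s hpre, hpre']
    · have h0 : T s ({ω : ℕ → S | ∀ j ≤ n+1, ω j ∈ U j} ∩ shift^[n+1] ⁻¹' F) = 0 := by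
        rw [traj_step P T hT s hG]
        have : consTraj s ⁻¹' ({ω : ℕ → S | ∀ j ≤ n+1, ω j ∈ U j} ∩ shift^[n+1] ⁻¹' F) = ∅ := by
          apply eq_empty_of_forall_notMem
          intro ω hω
          exact hs (hω.1 0 (by omega))
        rw [this]
        simp
      rw [h0]
      exact zero_le

lemma claim1 (P : Kernel S S) [IsMarkovKernel P] (T : Kernel S (ℕ → S))
    [IsMarkovKernel T] (hT : IsTrajKernel P T)
    {I V : Set S} (hI : MeasurableSet I) (hV : MeasurableSet V)
    (hret : ∀ u ∈ I, T u (retEvent V) = 1) (s : S) :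
    T s (invEvent I ∩ (infVisits V)ᶜ) = 0 := by
  have hsub : invEvent I ∩ (infVisits V)ᶜ ⊆
      ⋃ n, ({ω : ℕ → S | ∀ j ≤ n, ω j ∈ I} ∩ shift^[n] ⁻¹' (retEvent V)ᶜ) := by
    rintro ω ⟨hinv, hninf⟩
    simp only [infVisits, mem_compl_iff, mem_setOf_eq] at hninf
    push_neg at hninf
    obtain ⟨n, hn⟩ := hninf
    refine mem_iUnion.2 ⟨n, ⟨fun j _ => hinv j, ?_⟩⟩
    simp only [mem_preimage, mem_compl_iff, retEvent, mem_setOf_eq, not_exists]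
    intro m hm
    rw [shift_iter_apply] at hm
    exact hn (m + 1 + n) (by omega) hm
  refine le_antisymm (le_trans (measure_mono hsub) ?_) (zero_le)
  refine le_trans (measure_iUnion_le _) ?_
  have hzero : ∀ n : ℕ, T s ({ω : ℕ → S | ∀ j ≤ n, ω j ∈ I} ∩ shift^[n] ⁻¹' (retEvent V)ᶜ) = 0 := by
    intro n
    have := markov_bound P T hT (measurableSet_retEvent hV).compl 0 n (fun _ => I)
      (fun _ => hI) (fun u hu => by
        rw [(prob_compl_eq_zero_iff (measurableSet_retEvent hV)).2 (hret u hu)]) s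
    simpa using le_antisymm (by simpa using this) (zero_le)
  rw [ENNReal.tsum_eq_zero.2 (fun n => by simpa [Set.preimage_compl] using hzero n)]


end MarkovAux

/-- The varying prefix constraint used in the alternation cylinder. -/
def altW {S : Type*} (A Jset : Set S) (i m : ℕ) : ℕ → Set S := fun j =>
  if j < i then Jsetᶜ else if j = i then Jset else if j < i + m then Aᶜ else A

/-- Cylinder: first visit to `J` at time `i`, first subsequent visit to `A` at time `i+m`. -/
def cylJA {S : Type*} (A Jset : Set S) (i m : ℕ) : Set (ℕ → S) :=
  {ω | ∀ j ≤ i + m, ω j ∈ altW A Jset i m j}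

/-- Prefix: first visit to `J` at time `i`. -/
def preJ {S : Type*} (Jset : Set S) (i : ℕ) : Set (ℕ → S) :=
  {ω | ∀ j ≤ i, ω j ∈ (fun j => if j < i then Jsetᶜ else Jset) j}

/-- `n` alternations between `J` and `A`. -/
def altEvent {S : Type*} (A Jset : Set S) : ℕ → Set (ℕ → S)
  | 0 => univ
  | n + 1 => ⋃ i, ⋃ m, cylJA A Jset i (m + 1) ∩ shift^[i + (m + 1)] ⁻¹' altEvent A Jset n

section C2
variable {S : Type*} [MeasurableSpace S]

lemma altEvent_succ (A Jset : Set S) (n : ℕ) :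
    altEvent A Jset (n + 1)
      = ⋃ i, ⋃ m, cylJA A Jset i (m + 1) ∩ shift^[i + (m + 1)] ⁻¹' altEvent A Jset n := rfl

lemma mem_cylJA {A Jset : Set S} {i m : ℕ} (hm : 1 ≤ m) {ω : ℕ → S} :
    ω ∈ cylJA A Jset i m ↔
      (∀ j < i, ω j ∉ Jset) ∧ ω i ∈ Jset ∧
      (∀ r, 0 < r → r < m → ω (i + r) ∉ A) ∧ ω (i + m) ∈ A := by
  constructor
  · intro h
    refine ⟨fun j hj => ?_, ?_, fun r hr1 hr2 => ?_, ?_⟩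
    · have := h j (by omega)
      simpa [altW, hj] using this
    · have := h i (by omega)
      simpa [altW] using this
    · have := h (i + r) (by omega)
      simpa [altW, show ¬ (i+r < i) by omega, show ¬ (i+r = i) by omega,
        show i + r < i + m by omega, show ¬ r = 0 by omega] using this
    · have := h (i + m) (by omega)
      simpa [altW, show ¬ (i+m < i) by omega, show ¬ (i+m = i) by omega,
        show ¬ (i + m < i + m) by omega, show ¬ m = 0 by omega] using this
  · rintro ⟨h1, h2, h3, h4⟩ j hj
    unfold altW
    split_ifs with hc1 hc2 hc3
    · exact h1 j hc1
    · exact hc2 ▸ h2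
    · have hgt : i < j := by omega
      have := h3 (j - i) (by omega) (by omega)
      simpa [show i + (j - i) = j by omega] using this
    · have hj' : j = i + m := by omega
      exact hj' ▸ h4

lemma measurable_altW {A Jset : Set S} (hA : MeasurableSet A) (hJ : MeasurableSet Jset)
    (i m : ℕ) : ∀ j, MeasurableSet (altW A Jset i m j) := by
  intro j
  unfold altW
  split_ifs
  · exact hJ.compl
  · exact hJ
  · exact hA.compl
  · exact hA

lemma measurableSet_cylJA {A Jset : Set S} (hA : MeasurableSet A) (hJ : MeasurableSet Jset)
    (i m : ℕ) : MeasurableSet (cylJA A Jset i m) :=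
  measurableSet_prefix (measurable_altW hA hJ i m) (i + m)

lemma measurableSet_preJ {Jset : Set S} (hJ : MeasurableSet Jset) (i : ℕ) :
    MeasurableSet (preJ Jset i) :=
  measurableSet_prefix (fun j => by split_ifs; exacts [hJ.compl, hJ]) i

lemma measurableSet_altEvent {A Jset : Set S} (hA : MeasurableSet A) (hJ : MeasurableSet Jset) :
    ∀ n, MeasurableSet (altEvent A Jset n)
  | 0 => MeasurableSet.univ
  | (n+1) => by
    unfold altEvent
    exact MeasurableSet.iUnion fun i => MeasurableSet.iUnion fun m =>
      (measurableSet_cylJA hA hJ i (m+1)).inter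
        ((measurable_shift_iter _) (measurableSet_altEvent hA hJ n))

lemma shift_iter_infVisits {X : Set S} {ω : ℕ → S} (h : ω ∈ infVisits X) (k : ℕ) :
    shift^[k] ω ∈ infVisits X := by
  intro n
  obtain ⟨t, ht, htX⟩ := h (n + k)
  exact ⟨t - k, by omega, by rw [shift_iter_apply, show t - k + k = t by omega]; exact htX⟩

lemma infVisits_subset_altEvent {A Jset : Set S} :
    ∀ n, infVisits Jset ∩ infVisits A ⊆ altEvent A Jset n := by
  intro n
  induction n with
  | zero => intro ω _; trivial
  | succ n ih =>
    rintro ω ⟨hJ, hA⟩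
    classical
    have hexJ : ∃ t, ω t ∈ Jset := by
      obtain ⟨t, _, ht⟩ := hJ 0; exact ⟨t, ht⟩
    set i := Nat.find hexJ with hi
    have hiJ : ω i ∈ Jset := Nat.find_spec hexJ
    have himin : ∀ j < i, ω j ∉ Jset := fun j hj => Nat.find_min hexJ hj
    have hexA : ∃ r, ω (i + 1 + r) ∈ A := by
      obtain ⟨t, ht, htA⟩ := hA (i + 1)
      exact ⟨t - (i + 1), by rw [show i + 1 + (t - (i+1)) = t by omega]; exact htA⟩
    set r0 := Nat.find hexA with hr0
    have hr0A : ω (i + (r0 + 1)) ∈ A := by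
      have := Nat.find_spec hexA
      rwa [show i + 1 + r0 = i + (r0 + 1) by omega] at this
    have hr0min : ∀ r, 0 < r → r < r0 + 1 → ω (i + r) ∉ A := by
      intro r h1 h2
      have := Nat.find_min hexA (m := r - 1) (by omega)
      rwa [show i + 1 + (r - 1) = i + r by omega] at this
    refine mem_iUnion.2 ⟨i, mem_iUnion.2 ⟨r0, ?_, ?_⟩⟩
    · exact (mem_cylJA (by omega)).2 ⟨himin, hiJ, hr0min, hr0A⟩
    · exact ih ⟨shift_iter_infVisits hJ _, shift_iter_infVisits hA _⟩

lemma disjoint_cylJA_m {A Jset : Set S} (i : ℕ) :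
    Pairwise (Function.onFun Disjoint fun m => cylJA A Jset i (m + 1)) := by
  have key : ∀ m m' : ℕ, m < m' → Disjoint (cylJA A Jset i (m+1)) (cylJA A Jset i (m'+1)) := by
    intro m m' hlt
    rw [Set.disjoint_left]
    intro ω h1 h2
    have hA1 := ((mem_cylJA (by omega)).1 h1).2.2.2
    have hA2 := ((mem_cylJA (by omega)).1 h2).2.2.1 (m+1) (by omega) (by omega)
    exact hA2 hA1
  intro m m' hne
  rcases hne.lt_or_gt with h | h
  · exact key m m' h
  · exact (key m' m h).symm

lemma disjoint_preJ {Jset : Set S} :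
    Pairwise (Function.onFun Disjoint fun i => preJ (S := S) Jset i) := by
  have key : ∀ i i' : ℕ, i < i' → Disjoint (preJ (S := S) Jset i) (preJ Jset i') := by
    intro i i' hlt
    rw [Set.disjoint_left]
    intro ω h1 h2
    have hJ1 : ω i ∈ Jset := by have := h1 i le_rfl; simpa using this
    have hJ2 : ω i ∉ Jset := by have := h2 i (by omega); simpa [hlt] using this
    exact hJ2 hJ1
  intro i i' hne
  rcases hne.lt_or_gt with h | h
  · exact key i i' h
  · exact (key i' i h).symm

lemma cylJA_subset_preJ {A Jset : Set S} (i m : ℕ) (hm : 1 ≤ m) :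
    cylJA A Jset i m ⊆ preJ Jset i := by
  intro ω h j hj
  obtain ⟨h1, h2, _, _⟩ := (mem_cylJA hm).1 h
  dsimp only
  split_ifs with hc
  · exact h1 j hc
  · have : j = i := by omega
    exact this ▸ h2

lemma cylJA_subset_ret {A Jset : Set S} (i m : ℕ) :
    cylJA A Jset i (m + 1) ⊆ shift^[i] ⁻¹' retEvent A := by
  intro ω h
  obtain ⟨_, _, _, h4⟩ := (mem_cylJA (by omega)).1 h
  refine ⟨m, ?_⟩
  rw [shift_iter_apply, show m + 1 + i = i + (m + 1) by omega]
  exact h4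

lemma altEvent_bound (P : Kernel S S) [IsMarkovKernel P] (T : Kernel S (ℕ → S))
    [IsMarkovKernel T] (hT : IsTrajKernel P T)
    {A Jset : Set S} (hA : MeasurableSet A) (hJm : MeasurableSet Jset)
    (c : ℝ≥0∞) (hc : ∀ u ∈ Jset, T u (retEvent A) ≤ c) :
    ∀ n s, T s (altEvent A Jset n) ≤ c ^ n := by
  intro n
  induction n with
  | zero => intro s; simpa [altEvent] using measure_mono (subset_univ _)
  | succ n ih =>
    intro s
    have hg : ∀ u : S, T u (altEvent A Jset n) ≤ c ^ n := ih
    calc T s (altEvent A Jset (n+1))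
        ≤ ∑' i, T s (⋃ m, cylJA A Jset i (m + 1) ∩ shift^[i + (m + 1)] ⁻¹' altEvent A Jset n) := by
          rw [altEvent_succ]
          exact measure_iUnion_le (μ := (T s : Measure (ℕ → S)))
            (fun i => ⋃ m, cylJA A Jset i (m + 1) ∩ shift^[i + (m + 1)] ⁻¹' altEvent A Jset n)
      _ ≤ ∑' i, ∑' m, T s (cylJA A Jset i (m + 1) ∩ shift^[i + (m + 1)] ⁻¹' altEvent A Jset n) :=
          ENNReal.tsum_le_tsum fun i => measure_iUnion_le (μ := (T s : Measure (ℕ → S)))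
            (fun m => cylJA A Jset i (m + 1) ∩ shift^[i + (m + 1)] ⁻¹' altEvent A Jset n)
      _ ≤ ∑' i, ∑' m, c ^ n * T s (cylJA A Jset i (m + 1)) := by
          refine ENNReal.tsum_le_tsum fun i => ENNReal.tsum_le_tsum fun m => ?_
          have := markov_bound P T hT (measurableSet_altEvent hA hJm n) (c ^ n)
            (i + (m + 1)) (altW A Jset i (m + 1)) (measurable_altW hA hJm i (m+1))
            (fun u _ => hg u) s
          exact this
      _ = ∑' i, c ^ n * T s (⋃ m, cylJA A Jset i (m + 1)) := by
          congr 1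
          ext i
          rw [ENNReal.tsum_mul_left, measure_iUnion (disjoint_cylJA_m i)
            (fun m => measurableSet_cylJA hA hJm i (m+1))]
      _ ≤ ∑' i, c ^ n * (c * T s (preJ Jset i)) := by
          refine ENNReal.tsum_le_tsum fun i => mul_le_mul_right ?_ _
          have hsub : (⋃ m, cylJA A Jset i (m + 1)) ⊆ preJ Jset i ∩ shift^[i] ⁻¹' retEvent A := by
            refine iUnion_subset fun m => subset_inter (cylJA_subset_preJ i (m+1) (by omega))
              (cylJA_subset_ret i m)
          calc T s (⋃ m, cylJA A Jset i (m + 1))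
              ≤ T s (preJ Jset i ∩ shift^[i] ⁻¹' retEvent A) := measure_mono hsub
            _ ≤ c * T s (preJ Jset i) := markov_bound P T hT (measurableSet_retEvent hA) c i _
                (fun j => by split_ifs; exacts [hJm.compl, hJm])
                (fun u hu => hc u (by simpa using hu)) s
      _ = c ^ n * c * ∑' i, T s (preJ Jset i) := by
          rw [← ENNReal.tsum_mul_left]
          congr 1
          ext i
          ring
      _ ≤ c ^ n * c * 1 := by
          refine mul_le_mul_right ?_ _
          rw [← measure_iUnion disjoint_preJ (fun i => measurableSet_preJ hJm i)]
          exact prob_le_one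
      _ ≤ c ^ (n + 1) := by
          rw [mul_one, pow_succ]

lemma claim2 (P : Kernel S S) [IsMarkovKernel P] (T : Kernel S (ℕ → S))
    [IsMarkovKernel T] (hT : IsTrajKernel P T)
    {A Jset : Set S} (hA : MeasurableSet A) (hJm : MeasurableSet Jset)
    (hc : (⨆ u ∈ Jset, T u (retEvent A)) < 1) (s : S) :
    T s (infVisits Jset ∩ infVisits A) = 0 := by
  set c := ⨆ u ∈ Jset, T u (retEvent A) with hcdef
  have hb : ∀ n, T s (infVisits Jset ∩ infVisits A) ≤ c ^ n := fun n =>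
    le_trans (measure_mono (infVisits_subset_altEvent n))
      (altEvent_bound P T hT hA hJm c (fun u hu => le_biSup (fun u => (T u) (retEvent A)) hu) n s)
  have htend : Tendsto (fun n => c ^ n) atTop (nhds 0) :=
    ENNReal.tendsto_pow_atTop_nhds_zero_of_lt_one hc
  exact le_antisymm (ge_of_tendsto' htend hb) (zero_le)


end C2

section Final
variable {S : Type*} [MeasurableSpace S]

lemma start_notin (P : Kernel S S) (T : Kernel S (ℕ → S)) (hT : IsTrajKernel P T)
    {C : Set S} (hC : MeasurableSet C) {s : S} (hs : s ∉ C) :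
    T s {ω : ℕ → S | ω 0 ∈ C} = 0 := by
  rw [traj_step P T hT s (show MeasurableSet {ω : ℕ → S | ω 0 ∈ C} from (measurable_pi_apply 0) hC)]
  have : consTraj s ⁻¹' {ω : ℕ → S | ω 0 ∈ C} = ∅ := by
    ext ω; simpa [consTraj] using hs
  rw [this]
  simp


end Final

/-- soundness of the absorbing-region decomposition.  If `I` is a region
and `Jᵢ ⊆ I \ Aᵢ` are regions such that for each `i` the return probability from `Jᵢ`
to `Aᵢ` is bounded away from one and from every state of `I` the chain almost surely
returns to `Bᵢ ∪ Jᵢ ∪ Iᶜ`, then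
`P_μ(⋂ i, Fin(Aᵢ) ∪ Inf(Bᵢ)) ≥ P_μ(I^ω)`. -/
theorem absorbing_region_decomposition_sound
    {S : Type*} [MeasurableSpace S]
    (P : Kernel S S) [IsMarkovKernel P]
    (T : Kernel S (ℕ → S)) [IsMarkovKernel T] (hT : IsTrajKernel P T)
    (μ : Measure S) [IsProbabilityMeasure μ]
    (k : ℕ) (A B : Fin k → Set S)
    (hA : ∀ i, MeasurableSet (A i)) (hB : ∀ i, MeasurableSet (B i))
    (I : Set S) (hI : MeasurableSet I)
    (J : Fin k → Set S) (hJmeas : ∀ i, MeasurableSet (J i))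
    (hJ : ∀ i, J i ⊆ I \ A i)
    (h1 : ∀ i, (⨆ s ∈ J i, T s (retEvent (A i))) < 1)
    (h2 : ∀ i, ∀ s ∈ I, T s (retEvent (B i ∪ J i ∪ Iᶜ)) = 1) :
    (μ.bind (fun s => (T s : Measure (ℕ → S)))) (invEvent I) ≤
      (μ.bind (fun s => (T s : Measure (ℕ → S))))
        (⋂ i, finVisits (A i) ∪ infVisits (B i)) := by
  have hEmeas : MeasurableSet (⋂ i, finVisits (A i) ∪ infVisits (B i)) :=
    MeasurableSet.iInter fun i =>
      (measurableSet_finVisits (hA i)).union (measurableSet_infVisits (hB i))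
  rw [Measure.bind_apply (measurableSet_invEvent hI) T.measurable.aemeasurable,
    Measure.bind_apply hEmeas T.measurable.aemeasurable]
  refine lintegral_mono fun s => ?_
  -- pointwise: T s (invEvent I) ≤ T s E
  set E := ⋂ i, finVisits (A i) ∪ infVisits (B i) with hE
  have key : T s (invEvent I \ E) = 0 := by
    have hsub : invEvent I \ E ⊆ ⋃ i, invEvent I ∩ (finVisits (A i) ∪ infVisits (B i))ᶜ := by
      rintro ω ⟨hinv, hne⟩
      simp only [hE, mem_iInter, not_forall] at hne
      obtain ⟨i, hi⟩ := hne
      exact mem_iUnion.2 ⟨i, hinv, hi⟩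
    refine measure_mono_null hsub (le_antisymm (le_trans (measure_iUnion_le _) ?_) (zero_le))
    have hzero : ∀ i : Fin k, T s (invEvent I ∩ (finVisits (A i) ∪ infVisits (B i))ᶜ) = 0 := by
      intro i
      by_cases hs : s ∈ I
      · have hVmeas : MeasurableSet (B i ∪ J i ∪ Iᶜ) :=
          ((hB i).union (hJmeas i)).union hI.compl
        have hz1 := claim1 P T hT hI hVmeas (h2 i) s
        have hz2 := claim2 P T hT (hA i) (hJmeas i) (h1 i) s
        refine measure_mono_null ?_
          (le_antisymm (le_trans (measure_union_le
            (invEvent I ∩ (infVisits (B i ∪ J i ∪ Iᶜ))ᶜ)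
            (infVisits (J i) ∩ infVisits (A i))) (by rw [hz1, hz2, add_zero])) (zero_le))
        rintro ω ⟨hinv, hc⟩
        simp only [mem_compl_iff, mem_union, not_or] at hc
        obtain ⟨hnfin, hninf⟩ := hc
        have hInfA : ω ∈ infVisits (A i) := by
          rw [finVisits_eq_compl] at hnfin
          simpa using hnfin
        by_cases hIV : ω ∈ infVisits (B i ∪ J i ∪ Iᶜ)
        · right
          refine ⟨?_, hInfA⟩
          intro n
          simp only [infVisits, mem_setOf_eq] at hninf
          push_neg at hninf
          obtain ⟨nB, hnB⟩ := hninf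
          obtain ⟨m, hm, hmem⟩ := hIV (max n nB)
          have hmB : ω m ∉ B i := hnB m (le_trans (le_max_right _ _) hm)
          have hmI : ω m ∉ Iᶜ := by simpa using hinv m
          rcases hmem with (hb | hj) | hic
          · exact absurd hb hmB
          · exact ⟨m, le_trans (le_max_left _ _) hm, hj⟩
          · exact absurd hic hmI
        · exact Or.inl ⟨hinv, hIV⟩
      · exact measure_mono_null (fun ω hω => hω.1 0) (start_notin P T hT hI hs)
    rw [ENNReal.tsum_eq_zero.2 hzero]
  calc T s (invEvent I) ≤ T s (E ∪ invEvent I \ E) :=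
        measure_mono (fun ω hω => by
          by_cases h : ω ∈ E
          · exact Or.inl h
          · exact Or.inr ⟨hω, h⟩)
    _ ≤ T s E + T s (invEvent I \ E) := measure_union_le _ _
    _ = T s E := by rw [key, add_zero]
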